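/- arXiv:1207.0108 — 2 statements merged into one kernel-verified Lean document; each statement's English description precedes it below -/
import Mathlib

section
/- Let (q_k)_{k≥1} and α_{k,i} be as in the four-species coefficient setup. Then for every k ≥ 1, ∫₀¹ q_k(x) dx = 1/4; equivalently, Σ_{j≥1} α_{k,j}/(j+1) = 1/4. -/
/-!
Write `G s = ∫ t in s..1, f t`. Integrating out `ξ₃`, and then `ξ₁` after a Fubini swap with
`ξ₂ = s`, turns the Bak–Sneppen step into
`T f x = ∫ s in 0..x, ((f x + f s) (1 - s)² + 2 (1 - s) G s)`.
A second Fubini swap gives `∫₀¹ T f = ∫₀¹ (3 (1 - s)² G s + (1 - s)³ f s) ds`, and this integrand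
is the derivative of `-(1 - s)³ G s`, so `∫₀¹ T f = G 0 = ∫₀¹ f`. Hence every `q k` has the
integral `1/4` of `q 1`. Since `T f 0` is an integral over `[0, 0]`, every `q k` vanishes at `0`,
so the constant coefficient drops out of the coefficient form.
-/

open MeasureTheory Polynomial Set intervalIntegral

theorem integral_ite_lt_of_mem_Icc {a b c : ℝ} (hc : c ∈ Icc a b) (φ : ℝ → ℝ) :
    ∫ t in a..b, (if t < c then φ t else 0) = ∫ t in a..c, φ t := by
  have hset : Ioc a b ∩ Iio c = Ioo a c := by
    ext t
    simp only [mem_inter_iff, mem_Ioc, mem_Iio, mem_Ioo]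
    exact ⟨fun h => ⟨h.1.1, h.2⟩, fun h => ⟨⟨h.1, h.2.le.trans hc.2⟩, h.2⟩⟩
  have hind : (fun t => if t < c then φ t else 0) = (Iio c).indicator φ := by
    ext t; simp [indicator_apply]
  rw [hind, integral_of_le (hc.1.trans hc.2), integral_of_le hc.1,
    setIntegral_indicator measurableSet_Iio, hset, integral_Ioc_eq_integral_Ioo]

theorem integral_ite_gt_of_mem_Icc {a b c : ℝ} (hc : c ∈ Icc a b) (φ : ℝ → ℝ) :
    ∫ t in a..b, (if c < t then φ t else 0) = ∫ t in c..b, φ t := by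
  have hind : (fun t => if c < t then φ t else 0) = (Ioi c).indicator φ := by
    ext t; simp [indicator_apply]
  rw [hind, integral_of_le (hc.1.trans hc.2), integral_of_le hc.2,
    setIntegral_indicator measurableSet_Ioi, Ioc_inter_Ioi, max_eq_right hc.1]

theorem integral_const_add_const_mul {a b : ℝ} {f : ℝ → ℝ}
    (hf : IntervalIntegrable f volume a b) (α β : ℝ) :
    ∫ t in a..b, (α + β * f t) = α * (b - a) + β * ∫ t in a..b, f t := by
  rw [integral_add intervalIntegrable_const (hf.const_mul β), intervalIntegral.integral_const,
    intervalIntegral.integral_const_mul, smul_eq_mul, mul_comm]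

theorem integral_integral_ite_lt_swap {g : ℝ → ℝ} (hg : Continuous g) {F : ℝ → ℝ → ℝ}
    (hF : Continuous (Function.uncurry F)) (a b c d : ℝ) :
    ∫ x in a..b, ∫ y in c..d, (if y < g x then F x y else 0)
      = ∫ y in c..d, ∫ x in a..b, (if y < g x then F x y else 0) := by
  refine intervalIntegral_intervalIntegral_swap ?_
  have hs : MeasurableSet {p : ℝ × ℝ | p.2 < g p.1} :=
    measurableSet_lt measurable_snd (hg.measurable.comp measurable_fst)
  have hK : IntegrableOn (Function.uncurry F) (uIoc a b ×ˢ uIoc c d) :=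
    (hF.continuousOn.integrableOn_compact (μ := volume)
      (isCompact_uIcc.prod isCompact_uIcc)).mono_set (prod_mono uIoc_subset_uIcc uIoc_subset_uIcc)
  have hind : Function.uncurry (fun x y => if y < g x then F x y else 0)
      = {p : ℝ × ℝ | p.2 < g p.1}.indicator (Function.uncurry F) := by
    ext ⟨x, y⟩; simp [indicator_apply]
  exact hind ▸ hK.indicator hs

noncomputable def bakSneppenStep (f : ℝ → ℝ) (x : ℝ) : ℝ :=
  ∫ ξ₁ in (0:ℝ)..1, ∫ ξ₂ in (0:ℝ)..1, ∫ ξ₃ in (0:ℝ)..1,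
    if ξ₂ < min ξ₁ (min ξ₃ x) then f x + f ξ₁ + f ξ₂ + f ξ₃ else 0

section BakSneppen

variable {f : ℝ → ℝ}

theorem hasDerivAt_integral_tail (hf : Continuous f) (b s : ℝ) :
    HasDerivAt (fun u => ∫ t in u..b, f t) (-f s) s :=
  integral_hasDerivAt_left (hf.intervalIntegrable _ _) (hf.stronglyMeasurableAtFilter _ _)
    hf.continuousAt

theorem continuous_integral_tail (hf : Continuous f) (b : ℝ) :
    Continuous fun u => ∫ t in u..b, f t :=
  continuous_iff_continuousAt.2 fun s => (hasDerivAt_integral_tail hf b s).continuousAt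

theorem integral_neg_deriv_cube_mul_tail (hf : Continuous f) :
    ∫ s in (0:ℝ)..1, (3 * (1 - s) ^ 2 * (∫ t in s..1, f t) + (1 - s) ^ 3 * f s)
      = ∫ t in (0:ℝ)..1, f t := by
  have hderiv : ∀ s ∈ uIcc (0:ℝ) 1, HasDerivAt (fun u => -((1 - u) ^ 3 * ∫ t in u..1, f t))
      (3 * (1 - s) ^ 2 * (∫ t in s..1, f t) + (1 - s) ^ 3 * f s) s := fun s _ => by
    refine ((((hasDerivAt_id' s).const_sub 1).fun_pow 3).fun_mul
      (hasDerivAt_integral_tail hf 1 s)).fun_neg.congr_deriv ?_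
    norm_num
    ring
  have hG := continuous_integral_tail hf 1
  rw [integral_eq_sub_of_hasDerivAt hderiv (by apply Continuous.intervalIntegrable; fun_prop)]
  simp

theorem integral_bakSneppen_innermost (hf : Continuous f) (x ξ₁ : ℝ) {s : ℝ}
    (hs : s ∈ Icc (0:ℝ) 1) :
    ∫ ξ₃ in (0:ℝ)..1, (if s < min ξ₁ (min ξ₃ x) then f x + f ξ₁ + f s + f ξ₃ else 0)
      = if s < min ξ₁ x then (f x + f ξ₁ + f s) * (1 - s) + ∫ t in s..1, f t else 0 := by
  have hsplit : ∀ ξ₃, s < min ξ₁ (min ξ₃ x) ↔ s < min ξ₁ x ∧ s < ξ₃ := fun ξ₃ => by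
    simp only [lt_min_iff]; tauto
  simp_rw [hsplit, ite_and]
  split_ifs
  · rw [integral_ite_gt_of_mem_Icc hs]
    simpa using integral_const_add_const_mul (hf.intervalIntegrable s 1) (f x + f ξ₁ + f s) 1
  · simp

theorem bakSneppenStep_eq_integral (hf : Continuous f) {x : ℝ} (hx : x ∈ Icc (0:ℝ) 1) :
    bakSneppenStep f x
      = ∫ s in (0:ℝ)..x, ((f x + f s) * (1 - s) ^ 2 + 2 * (1 - s) * ∫ t in s..1, f t) := by
  have hG := continuous_integral_tail hf 1
  have hsplit : ∀ ξ₁ s, s < min ξ₁ x ↔ s < x ∧ s < ξ₁ := fun ξ₁ s => by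
    simp only [lt_min_iff]; tauto
  calc bakSneppenStep f x
      = ∫ ξ₁ in (0:ℝ)..1, ∫ s in (0:ℝ)..1,
          if s < min ξ₁ x then (f x + f ξ₁ + f s) * (1 - s) + ∫ t in s..1, f t else 0 :=
        integral_congr fun ξ₁ _ => integral_congr fun s hs =>
          integral_bakSneppen_innermost hf x ξ₁ (by rwa [uIcc_of_le zero_le_one] at hs)
    _ = ∫ s in (0:ℝ)..1, ∫ ξ₁ in (0:ℝ)..1,
          if s < min ξ₁ x then (f x + f ξ₁ + f s) * (1 - s) + ∫ t in s..1, f t else 0 :=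
        integral_integral_ite_lt_swap (g := fun ξ₁ => min ξ₁ x) (by fun_prop)
          (F := fun ξ₁ s => (f x + f ξ₁ + f s) * (1 - s) + ∫ t in s..1, f t) (by fun_prop)
          _ _ _ _
    _ = ∫ s in (0:ℝ)..1, if s < x then
          (f x + f s) * (1 - s) ^ 2 + 2 * (1 - s) * ∫ t in s..1, f t else 0 := by
        refine integral_congr fun s hs => ?_
        rw [uIcc_of_le zero_le_one] at hs
        simp_rw [hsplit, ite_and]
        split_ifs
        · rw [integral_ite_gt_of_mem_Icc hs, integral_congr (g := fun ξ₁ =>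
            ((f x + f s) * (1 - s) + ∫ t in s..1, f t) + (1 - s) * f ξ₁) fun _ _ => by ring,
            integral_const_add_const_mul (hf.intervalIntegrable s 1)]
          ring
        · simp
    _ = _ := integral_ite_lt_of_mem_Icc hx _

theorem integral_bakSneppenStep (hf : Continuous f) :
    ∫ x in (0:ℝ)..1, bakSneppenStep f x = ∫ t in (0:ℝ)..1, f t := by
  have hG := continuous_integral_tail hf 1
  calc ∫ x in (0:ℝ)..1, bakSneppenStep f x
      = ∫ x in (0:ℝ)..1, ∫ s in (0:ℝ)..1, if s < x then
          (f x + f s) * (1 - s) ^ 2 + 2 * (1 - s) * (∫ t in s..1, f t) else 0 := by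
        refine integral_congr fun x hx => ?_
        rw [uIcc_of_le zero_le_one] at hx
        rw [bakSneppenStep_eq_integral hf hx, integral_ite_lt_of_mem_Icc hx]
    _ = ∫ s in (0:ℝ)..1, ∫ x in (0:ℝ)..1, if s < x then
          (f x + f s) * (1 - s) ^ 2 + 2 * (1 - s) * (∫ t in s..1, f t) else 0 :=
        integral_integral_ite_lt_swap (g := id) continuous_id
          (F := fun x s => (f x + f s) * (1 - s) ^ 2 + 2 * (1 - s) * ∫ t in s..1, f t)
          (by fun_prop) _ _ _ _
    _ = ∫ s in (0:ℝ)..1, (3 * (1 - s) ^ 2 * (∫ t in s..1, f t) + (1 - s) ^ 3 * f s) := by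
        refine integral_congr fun s hs => ?_
        rw [uIcc_of_le zero_le_one] at hs
        rw [integral_ite_gt_of_mem_Icc hs, integral_congr (g := fun x =>
          (f s * (1 - s) ^ 2 + 2 * (1 - s) * ∫ t in s..1, f t) + (1 - s) ^ 2 * f x)
          fun _ _ => by ring, integral_const_add_const_mul (hf.intervalIntegrable s 1)]
        ring
    _ = ∫ t in (0:ℝ)..1, f t := integral_neg_deriv_cube_mul_tail hf

end BakSneppen

theorem integral_aeval_eq_sum_coeff (p : ℚ[X]) :
    ∫ x in (0:ℝ)..1, aeval x p
      = ((∑ j ∈ Finset.range (p.natDegree + 1), p.coeff j / ((j : ℚ) + 1) : ℚ) : ℝ) := by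
  simp_rw [aeval_eq_sum_range, Rat.smul_def]
  rw [integral_finsetSum (f := fun j (x : ℝ) => (p.coeff j : ℝ) * x ^ j) fun j _ =>
    (continuous_const.mul (continuous_pow j)).intervalIntegrable _ _]
  push_cast
  refine Finset.sum_congr rfl fun j _ => ?_
  rw [intervalIntegral.integral_const_mul, integral_pow]
  norm_num
  ring

/-- In the four-species coefficient setup, $\int_0^1 q_k(x)\,dx = 1/4$; equivalently,
$\sum_{j\ge 1} \alpha_{k,j}/(j+1) = 1/4$ (the sum over all $j \ge 1$ is finite since
all but finitely many coefficients vanish). -/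
theorem bs4_integral_one_quarter
    (q : ℕ → Polynomial ℚ)
    (hq1 : q 1 = X - X ^ 2 + C (1/3 : ℚ) * X ^ 3)
    (hrec : ∀ k, 1 ≤ k → ∀ x ∈ Set.Icc (0 : ℝ) 1,
      (Polynomial.aeval x) (q (k + 1)) =
        ∫ ξ₁ in (0:ℝ)..1, ∫ ξ₂ in (0:ℝ)..1, ∫ ξ₃ in (0:ℝ)..1,
          if ξ₂ < min ξ₁ (min ξ₃ x) then
            (Polynomial.aeval x) (q k) + (Polynomial.aeval ξ₁) (q k)
              + (Polynomial.aeval ξ₂) (q k) + (Polynomial.aeval ξ₃) (q k)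
          else 0)
    (k : ℕ) (hk : 1 ≤ k) :
    (∫ x in (0:ℝ)..1, (Polynomial.aeval x) (q k)) = 1 / 4
    ∧ ∑ j ∈ Finset.Icc 1 (q k).natDegree, (q k).coeff j / ((j : ℚ) + 1) = 1 / 4 := by
  have hstep : ∀ n, 1 ≤ n → ∀ x ∈ Icc (0:ℝ) 1,
      aeval x (q (n + 1)) = bakSneppenStep (fun t => aeval t (q n)) x := hrec
  have hintegral : ∀ n, 1 ≤ n → ∫ x in (0:ℝ)..1, aeval x (q n) = 1 / 4 := by
    intro n hn
    induction n, hn using Nat.le_induction with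
    | base => norm_num [hq1, integral_pow]
    | succ n hn ih =>
      rw [integral_congr fun x hx => hstep n hn x (uIcc_of_le (zero_le_one' ℝ) ▸ hx),
        integral_bakSneppenStep (q n).continuous_aeval, ih]
  have hcoeff : ∀ n, 1 ≤ n → (q n).coeff 0 = 0 := by
    intro n hn
    induction n, hn using Nat.le_induction with
    | base => simp [hq1]
    | succ n hn _ =>
      have h0 := hstep n hn 0 (left_mem_Icc.2 zero_le_one)
      rw [bakSneppenStep_eq_integral (q n).continuous_aeval (left_mem_Icc.2 zero_le_one),
        integral_same, ← coeff_zero_eq_aeval_zero'] at h0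
      simpa using h0
  refine ⟨hintegral k hk, ?_⟩
  have hsum := (integral_aeval_eq_sum_coeff (q k)).symm.trans (hintegral k hk)
  rw [Nat.range_succ_eq_Icc_zero, ← Finset.add_sum_Ioc_eq_sum_Icc (Nat.zero_le _), hcoeff k hk,
    zero_div, zero_add, ← Finset.Icc_add_one_left_eq_Ioc, zero_add] at hsum
  exact Rat.cast_injective (α := ℝ) (hsum.trans (by norm_num))
end

section
/- Let q(x) = (3/2)·x(3 − x(3 − x)) / (3 − x(3 − x(3 − x)))². Then q(x) ≥ 0 for all x ∈ [0,1] and ∫₀¹ q(x) dx = 1/4. Consequently the function g(x₁,x₂,x₃,x₄) = Σ_{ν=1}^4 q(x_ν) is nonnegative on [0,1]⁴ and satisfies ∫_{[0,1]⁴} g(x) dx = 1, i.e. g is a probability density on [0,1]⁴; it is the density of the stationary distribution μ of the four-species Bak–Sneppen model. -/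
open MeasureTheory

/-- The limiting single-site density `q` of the four-species Bak–Sneppen model. -/
noncomputable def bsQ (x : ℝ) : ℝ :=
  (3 / 2) * (x * (3 - x * (3 - x))) / (3 - x * (3 - x * (3 - x))) ^ 2

/-!
`q` has the rational antiderivative `-(3/4)(1 - x) / (3 - 3x + 3x² - x³)`, whose values at `0`
and `1` are `-1/4` and `0`. A sum `Σ_ν q(x_ν)` over the unit cube integrates coordinatewise, since
each coordinate projection pushes the uniform measure on the cube forward to the uniform measure
on `[0,1]`.
-/

section CoordinateSums

variable {ι : Type*} [Fintype ι] {E : Type*} [NormedAddCommGroup E] [NormedSpace ℝ E]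

theorem MeasureTheory.integral_sum_comp_eval {α : Type*} [MeasurableSpace α] {μ : Measure α}
    [IsProbabilityMeasure μ] {f : α → E} (hf : Integrable f μ) :
    ∫ x : ι → α, ∑ i, f (x i) ∂Measure.pi (fun _ ↦ μ) = Fintype.card ι • ∫ y, f y ∂μ := by
  rw [integral_finsetSum _ fun i _ ↦ integrable_comp_eval hf]
  simp only [integral_comp_eval (μ := fun _ : ι ↦ μ) hf.aestronglyMeasurable, Finset.sum_const,
    Finset.card_univ]

theorem integral_unitCube_sum_comp_eval {f : ℝ → E} (hf : IntegrableOn f (Set.Icc 0 1)) :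
    ∫ x in Set.univ.pi fun _ : ι ↦ Set.Icc (0 : ℝ) 1, ∑ i, f (x i) =
      Fintype.card ι • ∫ t in Set.Icc (0 : ℝ) 1, f t := by
  have : IsProbabilityMeasure (volume.restrict (Set.Icc (0 : ℝ) 1)) := ⟨by simp⟩
  rw [volume_pi, Measure.restrict_pi_pi]
  exact integral_sum_comp_eval hf

end CoordinateSums

theorem bsQ_denom_pos {x : ℝ} (hx : x ≤ 1) : 0 < 3 - x * (3 - x * (3 - x)) := by
  have hcube : 3 - x * (3 - x * (3 - x)) = 2 + (1 - x) ^ 3 := by ring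
  have hcube_nonneg := pow_nonneg (sub_nonneg.2 hx) 3
  linarith

theorem bsQ_nonneg {x : ℝ} (hx : 0 ≤ x) : 0 ≤ bsQ x := by
  have hquad : 0 < 3 - x * (3 - x) := by nlinarith [sq_nonneg (x - 3 / 2)]
  unfold bsQ
  positivity

theorem continuousOn_bsQ : ContinuousOn bsQ (Set.Iic 1) :=
  ContinuousOn.div (by fun_prop) (by fun_prop) fun _ hx ↦ pow_ne_zero 2 (bsQ_denom_pos hx).ne'

theorem hasDerivAt_bsQ_antideriv {x : ℝ} (hx : x ≤ 1) :
    HasDerivAt (fun y ↦ -(3 / 4) * (1 - y) / (3 - y * (3 - y * (3 - y)))) (bsQ x) x := by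
  have hid := hasDerivAt_id' x
  have hnum := (hid.const_sub 1).const_mul (-(3 / 4) : ℝ)
  have hden : HasDerivAt (fun y ↦ 3 - y * (3 - y * (3 - y)))
      (-(1 * (3 - x * (3 - x)) + x * -(1 * (3 - x) + x * -1))) x :=
    (hid.mul ((hid.mul (hid.const_sub 3)).const_sub 3)).const_sub 3
  refine (hnum.div hden (bsQ_denom_pos hx).ne').congr_deriv ?_
  unfold bsQ
  field_simp
  ring

theorem integral_bsQ : ∫ x in (0 : ℝ)..1, bsQ x = 1 / 4 := by
  have hle : ∀ x ∈ Set.uIcc (0 : ℝ) 1, x ≤ 1 := fun x hx ↦ hx.2.trans (by norm_num)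
  rw [intervalIntegral.integral_eq_sub_of_hasDerivAt
    (fun x hx ↦ hasDerivAt_bsQ_antideriv (hle x hx)) (continuousOn_bsQ.mono hle).intervalIntegrable]
  norm_num

/-- `q ≥ 0` on `[0,1]` with `∫₀¹ q = 1/4`; hence `g(x) = Σ_ν q(x_ν)` is a probability
density on `[0,1]⁴` (the density of the stationary distribution of the four-species
Bak–Sneppen model). -/
theorem bs4_stationary_is_probability_density :
    (∀ x ∈ Set.Icc (0 : ℝ) 1, 0 ≤ bsQ x)
    ∧ (∫ x in (0:ℝ)..1, bsQ x) = 1 / 4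
    ∧ (∀ x : Fin 4 → ℝ, (∀ ν, x ν ∈ Set.Icc (0 : ℝ) 1) → 0 ≤ ∑ ν : Fin 4, bsQ (x ν))
    ∧ (∫ x in (Set.univ.pi fun _ : Fin 4 => Set.Icc (0 : ℝ) 1),
        ∑ ν : Fin 4, bsQ (x ν)) = 1 := by
  have hint : IntegrableOn bsQ (Set.Icc 0 1) :=
    (continuousOn_bsQ.mono Set.Icc_subset_Iic_self).integrableOn_compact isCompact_Icc
  refine ⟨fun x hx ↦ bsQ_nonneg hx.1, integral_bsQ,
    fun x hx ↦ Finset.sum_nonneg fun ν _ ↦ bsQ_nonneg (hx ν).1, ?_⟩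
  rw [integral_unitCube_sum_comp_eval hint, integral_Icc_eq_integral_Ioc,
    ← intervalIntegral.integral_of_le zero_le_one, integral_bsQ]
  norm_num
end
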